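/- (Frequency propagation performs gradient descent in resistive networks.) Let V = EuclideanSpace ℝ (Fin N), let S be a finite set of ordered pairs (j,k) of nodes in Fin N, let x : Fin N → ℝ, let E_nl : V → ℝ be C³, let C : V → ℝ be C², and for conductances θ : S → ℝ define the energy E θ v = E_nl v + (1/2)·Σ_{(j,k)∈S} θ (j,k)·(v j − v k)² + Σ_j x j · v j. Let v⋆ : (S → ℝ) → ℝ → V be C³ jointly, satisfying for all θ and β the equilibrium condition gradient (fun w => E θ w + β·C w) (v⋆ θ β) = 0. Let L θ = C (v⋆ θ 0), let ω > 0, T = 2π/ω, and for γ ∈ ℝ define a(γ) = (1/T)·∫₀ᵀ v⋆ θ (γ·sin(ωt)) dt and b(γ) = (2/T)·∫₀ᵀ sin(ωt) • v⋆ θ (γ·sin(ωt)) dt. Then for every fixed θ and every edge (j,k) ∈ S, the function γ ↦ (a(γ) j − a(γ) k)·(b(γ) j − b(γ) k) − γ·(fderiv ℝ L θ (δ_{(j,k)})) is big-O of γ³ as γ → 0, where δ_{(j,k)} : S → ℝ is the indicator of the edge (j,k). -/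

import Mathlib

/-!
Two independent facts combine.

*Equilibrium propagation.* Put `F(θ, β) = E(θ, v⋆(θ, β)) + β C(v⋆(θ, β))`. Stationarity of
`v⋆` kills the variation through `v⋆`, so `∂_θ F = ∂_θ E(θ, v⋆)`, which in the direction of the
edge `(j, k)` is `½ (v⋆_j − v⋆_k)²`, and `∂_β F = C(v⋆)`. Equality of the mixed second partials
of `F` at `β = 0` then reads `∂L/∂θ_{jk} = f(0) f'(0)` for `f(β) = v⋆_j(θ, β) − v⋆_k(θ, β)`.

*Averaging.* Taylor expanding `f(γ sin ωt)` and using `∫ sin = ∫ sin³ = 0` and `∫ sin² = T/2`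
over a period gives `a_j − a_k = f(0) + O(γ²)` and `b_j − b_k = γ f'(0) + O(γ³)`, whose product
is `γ f(0) f'(0) + O(γ³)`.
-/

open MeasureTheory Asymptotics Filter Topology Set Real

theorem ContDiff.isBigO_sub_taylorWithinEval {E : Type*} [NormedAddCommGroup E]
    [NormedSpace ℝ E] {f : ℝ → E} {n : ℕ} (hf : ContDiff ℝ (n + 1) f) (x₀ : ℝ) :
    (fun x => f x - taylorWithinEval f n univ x₀ x) =O[𝓝 x₀] fun x => (x - x₀) ^ (n + 1) := by
  have hnext : (fun x => f x - taylorWithinEval f (n + 1) univ x₀ x)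
      =O[𝓝 x₀] fun x => (x - x₀) ^ (n + 1) :=
    (taylor_isLittleO_univ (by exact_mod_cast hf)).isBigO
  have hterm (c : ℝ) (v : E) :
      (fun x => (c * (x - x₀) ^ (n + 1)) • v) =O[𝓝 x₀] fun x => (x - x₀) ^ (n + 1) :=
    .of_bound (|c| * ‖v‖) <| .of_forall fun x => by
      rw [norm_smul, norm_mul, Real.norm_eq_abs c]; linarith
  refine (hnext.add (hterm (((n + 1 : ℝ) * n.factorial)⁻¹)
    (iteratedDerivWithin (n + 1) f univ x₀))).congr_left fun x => ?_
  rw [taylorWithinEval_succ]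
  abel

theorem ContDiff.isBigO_sub_taylor_one {f : ℝ → ℝ} (hf : ContDiff ℝ 2 f) :
    (fun s => f s - (f 0 + s * deriv f 0)) =O[𝓝 0] fun s => s ^ 2 := by
  simpa [iteratedDerivWithin_univ] using hf.isBigO_sub_taylorWithinEval (n := 1) 0

theorem ContDiff.isBigO_sub_taylor_two {f : ℝ → ℝ} (hf : ContDiff ℝ 3 f) :
    (fun s => f s - (f 0 + s * deriv f 0 + s ^ 2 / 2 * iteratedDeriv 2 f 0)) =O[𝓝 0]
      fun s => s ^ 3 := by
  have h := hf.isBigO_sub_taylorWithinEval (n := 2) 0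
  simp only [taylorWithinEval_succ, taylor_within_zero_eval, iteratedDerivWithin_univ,
    sub_zero, smul_eq_mul] at h
  refine h.congr_left fun s => ?_
  simp only [iteratedDeriv_one, Nat.factorial, zero_add, Nat.reduceAdd]
  push_cast
  ring

theorem integral_sin_mul_pow_period {ω : ℝ} (hω : ω ≠ 0) (n : ℕ) :
    ∫ t in (0 : ℝ)..2 * π / ω, sin (ω * t) ^ n = ω⁻¹ * ∫ x in (0 : ℝ)..2 * π, sin x ^ n := by
  rw [intervalIntegral.integral_comp_mul_left (fun x => sin x ^ n) hω, mul_zero,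
    mul_div_cancel₀ _ hω, smul_eq_mul]

theorem integral_sin_mul_period {ω : ℝ} (hω : ω ≠ 0) :
    ∫ t in (0 : ℝ)..2 * π / ω, sin (ω * t) = 0 := by
  simpa using integral_sin_mul_pow_period hω 1

theorem integral_sin_mul_sq_period {ω : ℝ} (hω : ω ≠ 0) :
    ∫ t in (0 : ℝ)..2 * π / ω, sin (ω * t) ^ 2 = π / ω := by
  rw [integral_sin_mul_pow_period hω, integral_sin_sq]
  simp
  ring

theorem integral_sin_mul_cube_period {ω : ℝ} (hω : ω ≠ 0) :
    ∫ t in (0 : ℝ)..2 * π / ω, sin (ω * t) ^ 3 = 0 := by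
  rw [integral_sin_mul_pow_period hω, integral_sin_pow (n := 1)]
  simp

theorem isBigO_intervalIntegral_mul_comp_mul {r : ℝ → ℝ} {n : ℕ}
    (hr : r =O[𝓝 0] fun s => s ^ n) {φ w : ℝ → ℝ} (hφ : ∀ t, |φ t| ≤ 1) (hw : ∀ t, |w t| ≤ 1)
    (a b : ℝ) :
    (fun γ => ∫ t in a..b, w t * r (γ * φ t)) =O[𝓝 0] fun γ => γ ^ n := by
  obtain ⟨c, hc, hcr⟩ := hr.exists_nonneg
  obtain ⟨ε, hε, hball⟩ := Metric.eventually_nhds_iff.1 hcr.bound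
  refine .of_bound (c * |b - a|) ?_
  filter_upwards [Metric.ball_mem_nhds 0 hε] with γ hγ
  have hγφ (t : ℝ) : |γ * φ t| ≤ |γ| := by
    rw [abs_mul]; exact mul_le_of_le_one_right (abs_nonneg γ) (hφ t)
  have hpoint (t : ℝ) : ‖w t * r (γ * φ t)‖ ≤ c * ‖γ ^ n‖ := by
    have hsmall : dist (γ * φ t) 0 < ε :=
      lt_of_le_of_lt (by simpa using hγφ t) (by simpa using hγ)
    calc ‖w t * r (γ * φ t)‖ ≤ 1 * ‖r (γ * φ t)‖ := by
          rw [norm_mul]; gcongr; exact hw t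
      _ ≤ c * ‖(γ * φ t) ^ n‖ := by rw [one_mul]; exact hball hsmall
      _ ≤ c * ‖γ ^ n‖ := by
          simp only [norm_pow, Real.norm_eq_abs]
          exact mul_le_mul_of_nonneg_left (pow_le_pow_left₀ (abs_nonneg _) (hγφ t) n) hc
  calc ‖∫ t in a..b, w t * r (γ * φ t)‖ ≤ c * ‖γ ^ n‖ * |b - a| :=
        intervalIntegral.norm_integral_le_of_norm_le_const fun t _ => hpoint t
    _ = c * |b - a| * ‖γ ^ n‖ := by ring

theorem isBigO_average_comp_mul_sin_sub {f : ℝ → ℝ} (hf : ContDiff ℝ 2 f) {ω : ℝ}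
    (hω : ω ≠ 0) :
    (fun γ => 1 / (2 * π / ω) * (∫ t in (0 : ℝ)..2 * π / ω, f (γ * sin (ω * t))) - f 0)
      =O[𝓝 0] fun γ => γ ^ 2 := by
  refine ((isBigO_intervalIntegral_mul_comp_mul hf.isBigO_sub_taylor_one
    (fun t => abs_sin_le_one (ω * t)) (fun _ => abs_one.le) 0 (2 * π / ω)).const_mul_left
      (1 / (2 * π / ω))).congr_left fun γ => ?_
  have hcont : Continuous fun t => f (γ * sin (ω * t)) := hf.continuous.comp (by fun_prop)
  simp only [one_mul]
  rw [intervalIntegral.integral_sub (hcont.intervalIntegrable _ _)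
      (Continuous.intervalIntegrable (by fun_prop) _ _),
    intervalIntegral.integral_add (Continuous.intervalIntegrable (by fun_prop) _ _)
      (Continuous.intervalIntegrable (by fun_prop) _ _)]
  simp only [intervalIntegral.integral_const, mul_assoc, intervalIntegral.integral_const_mul,
    intervalIntegral.integral_mul_const, integral_sin_mul_period hω, smul_eq_mul, sub_zero]
  generalize (∫ t in (0 : ℝ)..2 * π / ω, f (γ * sin (ω * t))) = I
  field_simp
  ring

theorem isBigO_sin_coeff_comp_mul_sin_sub {f : ℝ → ℝ} (hf : ContDiff ℝ 3 f) {ω : ℝ}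
    (hω : ω ≠ 0) :
    (fun γ => 2 / (2 * π / ω) * (∫ t in (0 : ℝ)..2 * π / ω, sin (ω * t) * f (γ * sin (ω * t)))
      - γ * deriv f 0) =O[𝓝 0] fun γ => γ ^ 3 := by
  refine ((isBigO_intervalIntegral_mul_comp_mul hf.isBigO_sub_taylor_two
    (fun t => abs_sin_le_one (ω * t)) (fun t => abs_sin_le_one (ω * t)) 0
      (2 * π / ω)).const_mul_left (2 / (2 * π / ω))).congr_left fun γ => ?_
  have hcont : Continuous fun t => sin (ω * t) * f (γ * sin (ω * t)) := by
    have := hf.continuous; fun_prop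
  have hpoly : ∀ t, sin (ω * t) * (f 0 + γ * sin (ω * t) * deriv f 0 +
      (γ * sin (ω * t)) ^ 2 / 2 * iteratedDeriv 2 f 0) = f 0 * sin (ω * t) +
      γ * deriv f 0 * sin (ω * t) ^ 2 + γ ^ 2 / 2 * iteratedDeriv 2 f 0 * sin (ω * t) ^ 3 :=
    fun t => by ring
  simp only [mul_sub, hpoly]
  rw [intervalIntegral.integral_sub (hcont.intervalIntegrable _ _)
      (Continuous.intervalIntegrable (by fun_prop) _ _),
    intervalIntegral.integral_add (Continuous.intervalIntegrable (by fun_prop) _ _)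
      (Continuous.intervalIntegrable (by fun_prop) _ _),
    intervalIntegral.integral_add (Continuous.intervalIntegrable (by fun_prop) _ _)
      (Continuous.intervalIntegrable (by fun_prop) _ _)]
  simp only [intervalIntegral.integral_const_mul, integral_sin_mul_period hω,
    integral_sin_mul_sq_period hω, integral_sin_mul_cube_period hω]
  generalize (∫ t in (0 : ℝ)..2 * π / ω, sin (ω * t) * f (γ * sin (ω * t))) = I
  field_simp
  ring

theorem isBigO_mul_sub_mul {A B : ℝ → ℝ} {c₀ c₁ : ℝ}
    (hA : (fun γ => A γ - c₀) =O[𝓝 0] fun γ => γ ^ 2)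
    (hB : (fun γ => B γ - γ * c₁) =O[𝓝 0] fun γ => γ ^ 3) :
    (fun γ => A γ * B γ - γ * (c₀ * c₁)) =O[𝓝 0] fun γ => γ ^ 3 := by
  have hB₁ : B =O[𝓝 0] fun γ => γ := by
    have hcube : (fun γ : ℝ => γ ^ 3) =O[𝓝 0] fun γ => γ := (isLittleO_pow_id (by norm_num)).isBigO
    refine ((hB.trans hcube).add ((isBigO_refl _ _).const_mul_left c₁)).congr_left fun γ => ?_
    ring
  refine ((hA.mul hB₁).add (hB.const_mul_left c₀)).congr' (.of_forall fun γ => ?_)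
    (.of_forall fun γ => ?_) <;> ring

section PartialDerivatives

variable {E F G : Type*} [NormedAddCommGroup E] [NormedSpace ℝ E] [NormedAddCommGroup F]
  [NormedSpace ℝ F] [NormedAddCommGroup G] [NormedSpace ℝ G]

theorem fderiv_apply_inl_eq_fderiv {h : E × F → G} {a : E} {b : F}
    (hh : DifferentiableAt ℝ h (a, b)) (e : E) :
    fderiv ℝ h (a, b) (e, 0) = fderiv ℝ (fun x => h (x, b)) a e := by
  have hcomp : HasFDerivAt (fun x => h (x, b))
      ((fderiv ℝ h (a, b)).comp (ContinuousLinearMap.inl ℝ E F)) a :=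
    hh.hasFDerivAt.comp a (hasFDerivAt_prodMk_left a b)
  rw [hcomp.fderiv]
  rfl

theorem fderiv_apply_inr_one_eq_deriv {h : E × ℝ → G} {a : E} {t : ℝ}
    (hh : DifferentiableAt ℝ h (a, t)) :
    fderiv ℝ h (a, t) (0, 1) = deriv (fun s => h (a, s)) t :=
  (hh.hasFDerivAt.comp_hasDerivAt t ((hasDerivAt_const t a).prodMk (hasDerivAt_id t))).deriv.symm

theorem fderiv_fderiv_apply_comm {f : E → G} {x : E} (hf : ContDiffAt ℝ 2 f x) (v w : E) :
    fderiv ℝ (fun y => fderiv ℝ f y v) x w = fderiv ℝ (fun y => fderiv ℝ f y w) x v := by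
  have hdiff : DifferentiableAt ℝ (fderiv ℝ f) x :=
    (hf.fderiv_right (m := 1) le_rfl).differentiableAt one_ne_zero
  rw [fderiv_clm_apply hdiff (differentiableAt_const v),
    fderiv_clm_apply hdiff (differentiableAt_const w)]
  simpa using (hf.isSymmSndFDerivAt (by simp)).eq w v

end PartialDerivatives

section EquilibriumPropagation

variable {Θ V : Type*} [NormedAddCommGroup Θ] [NormedSpace ℝ Θ] [NormedAddCommGroup V]
  [NormedSpace ℝ V] {E : Θ × V → ℝ} {C : V → ℝ} {v : Θ × ℝ → V}

theorem fderiv_energy_at_equilibrium_apply (hE : Differentiable ℝ E) (hC : Differentiable ℝ C)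
    (hv : Differentiable ℝ v)
    (heq : ∀ q : Θ × ℝ, fderiv ℝ (fun w => E (q.1, w) + q.2 * C w) (v q) = 0)
    (q w : Θ × ℝ) :
    fderiv ℝ (fun q => E (q.1, v q) + q.2 * C (v q)) q w =
      fderiv ℝ E (q.1, v q) (w.1, 0) + w.2 * C (v q) := by
  set DE := fderiv ℝ E (q.1, v q)
  set h := fderiv ℝ v q w
  have hstat : DE (0, h) + q.2 * fderiv ℝ C (v q) h = 0 := by
    have hpartial : HasFDerivAt (fun w => E (q.1, w) + q.2 * C w)
        (DE.comp (ContinuousLinearMap.inr ℝ Θ V) + q.2 • fderiv ℝ C (v q)) (v q) :=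
      ((hE _).hasFDerivAt.comp _ (hasFDerivAt_prodMk_right q.1 (v q))).add
        ((hC _).hasFDerivAt.const_mul q.2)
    simpa using congrArg (· h) (hpartial.fderiv.symm.trans (heq q))
  have htotal : HasFDerivAt (fun q => E (q.1, v q) + q.2 * C (v q))
      (DE.comp ((ContinuousLinearMap.fst ℝ Θ ℝ).prod (fderiv ℝ v q)) +
        (q.2 • (fderiv ℝ C (v q)).comp (fderiv ℝ v q) +
          C (v q) • ContinuousLinearMap.snd ℝ Θ ℝ)) q :=
    ((hE _).hasFDerivAt.comp q (hasFDerivAt_fst.prodMk (hv q).hasFDerivAt)).add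
      (hasFDerivAt_snd.mul ((hC _).hasFDerivAt.comp q (hv q).hasFDerivAt))
  have hsplit : DE (w.1, h) = DE (w.1, 0) + DE (0, h) := by
    rw [← map_add, Prod.mk_add_mk, add_zero, zero_add]
  rw [htotal.fderiv]
  simp only [add_apply, ContinuousLinearMap.comp_apply,
    ContinuousLinearMap.prod_apply, ContinuousLinearMap.coe_fst', smul_apply,
    ContinuousLinearMap.coe_snd', smul_eq_mul]
  rw [hsplit]
  linear_combination hstat

theorem fderiv_cost_at_equilibrium (hE : ContDiff ℝ 2 E) (hC : ContDiff ℝ 2 C)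
    (hv : ContDiff ℝ 2 v)
    (heq : ∀ q : Θ × ℝ, fderiv ℝ (fun w => E (q.1, w) + q.2 * C w) (v q) = 0) (θ e : Θ) :
    fderiv ℝ (fun θ => C (v (θ, 0))) θ e =
      deriv (fun β => fderiv ℝ E (θ, v (θ, β)) (e, 0)) 0 := by
  set F : Θ × ℝ → ℝ := fun q => E (q.1, v q) + q.2 * C (v q)
  have hF : ContDiff ℝ 2 F := (hE.comp (contDiff_fst.prodMk hv)).add (contDiff_snd.mul (hC.comp hv))
  have hvar := fderiv_energy_at_equilibrium_apply (hE.differentiable two_ne_zero)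
    (hC.differentiable two_ne_zero) (hv.differentiable two_ne_zero) heq
  have hparam : (fun q => fderiv ℝ F q (e, 0)) = fun q => fderiv ℝ E (q.1, v q) (e, 0) := by
    funext q; simp [F, hvar]
  have hnudge : (fun q => fderiv ℝ F q (0, 1)) = fun q => C (v q) := by
    funext q; simp [F, hvar, Prod.mk_zero_zero]
  have hsymm := fderiv_fderiv_apply_comm hF.contDiffAt (x := (θ, 0)) (e, 0) (0, 1)
  rw [hparam, hnudge, fderiv_apply_inr_one_eq_deriv, fderiv_apply_inl_eq_fderiv] at hsymm
  · exact hsymm.symm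
  · exact ((hC.comp hv).differentiable two_ne_zero) _
  · have hE' := (hE.fderiv_right (m := 1) le_rfl).comp (contDiff_fst.prodMk (hv.of_le one_le_two))
    exact (hE'.clm_apply contDiff_const).differentiable one_ne_zero _

end EquilibriumPropagation

noncomputable def networkEnergy {N : ℕ} (S : Finset (Fin N × Fin N)) (x : Fin N → ℝ)
    (Enl : EuclideanSpace ℝ (Fin N) → ℝ) (z : (↥S → ℝ) × EuclideanSpace ℝ (Fin N)) : ℝ :=
  Enl z.2 + (1 / 2) * ∑ p : ↥S, z.1 p * (z.2 (p : Fin N × Fin N).1 - z.2 (p : Fin N × Fin N).2) ^ 2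
    + ∑ j, x j * z.2 j

section NetworkEnergy

variable {N : ℕ} {S : Finset (Fin N × Fin N)} {x : Fin N → ℝ} {Enl : EuclideanSpace ℝ (Fin N) → ℝ}

theorem contDiff_networkEnergy {n : WithTop ℕ∞} (hEnl : ContDiff ℝ n Enl) :
    ContDiff ℝ n (networkEnergy S x Enl) := by
  unfold networkEnergy
  fun_prop

theorem networkEnergy_add_smul_single (θ : ↥S → ℝ) (w : EuclideanSpace ℝ (Fin N)) (p : ↥S)
    (s : ℝ) :
    networkEnergy S x Enl (θ + s • Pi.single p 1, w) =
      networkEnergy S x Enl (θ, w) +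
        s * ((1 / 2) * (w (p : Fin N × Fin N).1 - w (p : Fin N × Fin N).2) ^ 2) := by
  simp only [networkEnergy, Pi.add_apply, Pi.smul_apply, smul_eq_mul, add_mul,
    Finset.sum_add_distrib, Pi.single_apply, mul_ite, mul_one, mul_zero, ite_mul, zero_mul,
    Finset.sum_ite_eq', Finset.mem_univ, if_true]
  ring

theorem fderiv_networkEnergy_apply_single {θ : ↥S → ℝ} {w : EuclideanSpace ℝ (Fin N)}
    (hEnl : DifferentiableAt ℝ Enl w) (p : ↥S) :
    fderiv ℝ (networkEnergy S x Enl) (θ, w) (Pi.single p 1, 0) =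
      (1 / 2) * (w (p : Fin N × Fin N).1 - w (p : Fin N × Fin N).2) ^ 2 := by
  have hE : DifferentiableAt ℝ (networkEnergy S x Enl) (θ, w) := by
    unfold networkEnergy; fun_prop
  have hpath : HasDerivAt (fun s : ℝ => (θ + s • Pi.single p 1, w)) (Pi.single p 1, 0) 0 := by
    simpa using (((hasDerivAt_id (0 : ℝ)).smul_const (Pi.single p (1 : ℝ))).const_add θ).prodMk
      (hasDerivAt_const (0 : ℝ) w)
  have hline := hE.hasFDerivAt.comp_hasDerivAt_of_eq 0 hpath (by simp)
  simp only [Function.comp_def, networkEnergy_add_smul_single] at hline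
  simpa using (((hasDerivAt_id (0 : ℝ)).mul_const _).const_add _).unique hline |>.symm

theorem fderiv_cost_at_equilibrium_apply_single {C : EuclideanSpace ℝ (Fin N) → ℝ}
    {v : (↥S → ℝ) × ℝ → EuclideanSpace ℝ (Fin N)} (hEnl : ContDiff ℝ 2 Enl)
    (hC : ContDiff ℝ 2 C) (hv : ContDiff ℝ 2 v)
    (heq : ∀ q : (↥S → ℝ) × ℝ,
      fderiv ℝ (fun w => networkEnergy S x Enl (q.1, w) + q.2 * C w) (v q) = 0)
    (θ : ↥S → ℝ) (p : ↥S) :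
    fderiv ℝ (fun θ => C (v (θ, 0))) θ (Pi.single p 1) =
      (v (θ, 0) (p : Fin N × Fin N).1 - v (θ, 0) (p : Fin N × Fin N).2) *
        deriv (fun β => v (θ, β) (p : Fin N × Fin N).1 - v (θ, β) (p : Fin N × Fin N).2) 0 := by
  set f : ℝ → ℝ := fun β => v (θ, β) (p : Fin N × Fin N).1 - v (θ, β) (p : Fin N × Fin N).2
  have hvθ : Differentiable ℝ fun β => v (θ, β) :=
    (hv.differentiable two_ne_zero).comp ((differentiable_const θ).prodMk differentiable_id)
  have hf : DifferentiableAt ℝ f 0 :=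
    ((EuclideanSpace.proj _).differentiable.comp hvθ).sub
      ((EuclideanSpace.proj _).differentiable.comp hvθ) 0
  have henergy : (fun β => fderiv ℝ (networkEnergy S x Enl) (θ, v (θ, β)) (Pi.single p 1, 0)) =
      fun β => (1 / 2) * f β ^ 2 :=
    funext fun β => fderiv_networkEnergy_apply_single ((hEnl.differentiable two_ne_zero) _) p
  rw [fderiv_cost_at_equilibrium (contDiff_networkEnergy hEnl) hC hv heq, henergy,
    ((hf.hasDerivAt.fun_pow 2).const_mul (1 / 2)).deriv]
  ring

end NetworkEnergy

theorem EuclideanSpace.smul_intervalIntegral_apply_sub_apply {N : ℕ}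
    {g : ℝ → EuclideanSpace ℝ (Fin N)} {a b : ℝ} (hg : IntervalIntegrable g volume a b) (c : ℝ)
    (j k : Fin N) :
    (c • ∫ t in a..b, g t) j - (c • ∫ t in a..b, g t) k = c * ∫ t in a..b, (g t j - g t k) := by
  have h := (EuclideanSpace.proj j - EuclideanSpace.proj k :
    EuclideanSpace ℝ (Fin N) →L[ℝ] ℝ).intervalIntegral_comp_comm hg
  simp only [sub_apply, PiLp.proj_apply] at h
  rw [h, PiLp.smul_apply, PiLp.smul_apply, smul_eq_mul, smul_eq_mul, mul_sub]

/-- Frequency propagation performs gradient descent in resistive networks: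
with energy `E θ v = E_nl v + (1/2)·Σ_{(j,k)∈S} θ_{jk}(v_j − v_k)² + Σ_j x_j v_j`,
equilibrium state `v⋆` and loss `L θ = C (v⋆ θ 0)`, the Fourier coefficients
`a(γ) = (1/T)∫₀ᵀ v⋆ θ (γ sin ωt) dt` and `b(γ) = (2/T)∫₀ᵀ sin(ωt) • v⋆ θ (γ sin ωt) dt`
satisfy, for every edge `(j,k) ∈ S`,
`(a(γ)_j − a(γ)_k)(b(γ)_j − b(γ)_k) − γ·∂L/∂θ_{jk} = O(γ³)` as `γ → 0`. -/
theorem stmt13 {N : ℕ}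
    (S : Finset (Fin N × Fin N)) (x : Fin N → ℝ)
    (Enl : EuclideanSpace ℝ (Fin N) → ℝ) (hEnl : ContDiff ℝ 3 Enl)
    (C : EuclideanSpace ℝ (Fin N) → ℝ) (hC : ContDiff ℝ 2 C)
    (E : (↥S → ℝ) → EuclideanSpace ℝ (Fin N) → ℝ)
    (hEdef : ∀ (θ : ↥S → ℝ) (v : EuclideanSpace ℝ (Fin N)),
      E θ v = Enl v +
        (1 / 2) * ∑ p : ↥S, θ p * (v (p : Fin N × Fin N).1 - v (p : Fin N × Fin N).2) ^ 2 +
        ∑ j, x j * v j)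
    (vstar : (↥S → ℝ) → ℝ → EuclideanSpace ℝ (Fin N))
    (hv : ContDiff ℝ 3 (fun q : (↥S → ℝ) × ℝ => vstar q.1 q.2))
    (heq : ∀ (θ : ↥S → ℝ) (β : ℝ),
      gradient (fun w => E θ w + β * C w) (vstar θ β) = 0)
    (L : (↥S → ℝ) → ℝ) (hL : ∀ θ, L θ = C (vstar θ 0))
    (ω T : ℝ) (hω : 0 < ω) (hT : T = 2 * Real.pi / ω)
    (θ : ↥S → ℝ)
    (a b : ℝ → EuclideanSpace ℝ (Fin N))
    (ha : ∀ γ : ℝ, a γ = (1 / T) • ∫ t in (0 : ℝ)..T, vstar θ (γ * Real.sin (ω * t)))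
    (hb : ∀ γ : ℝ,
      b γ = (2 / T) • ∫ t in (0 : ℝ)..T, Real.sin (ω * t) • vstar θ (γ * Real.sin (ω * t)))
    (j k : Fin N) (hjk : (j, k) ∈ S) :
    Asymptotics.IsBigO (nhds (0 : ℝ))
      (fun γ : ℝ =>
        (a γ j - a γ k) * (b γ j - b γ k) -
          γ * fderiv ℝ L θ (Pi.single (⟨(j, k), hjk⟩ : ↥S) 1))
      (fun γ : ℝ => γ ^ 3) := by
  subst hT
  set f : ℝ → ℝ := fun β => vstar θ β j - vstar θ β k
  have hvθ : ContDiff ℝ 3 (vstar θ) := hv.comp (contDiff_const.prodMk contDiff_id)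
  have hf : ContDiff ℝ 3 f :=
    ((EuclideanSpace.proj j).contDiff.comp hvθ).sub ((EuclideanSpace.proj k).contDiff.comp hvθ)
  have hE : E = fun θ w => networkEnergy S x Enl (θ, w) := funext fun θ => funext (hEdef θ)
  subst hE
  have hstat (q : (↥S → ℝ) × ℝ) :
      fderiv ℝ (fun w => networkEnergy S x Enl (q.1, w) + q.2 * C w) (vstar q.1 q.2) = 0 := by
    simpa [gradient] using heq q.1 q.2
  have hgrad : fderiv ℝ L θ (Pi.single ⟨(j, k), hjk⟩ 1) = f 0 * deriv f 0 := by
    rw [show L = fun θ => C (vstar θ 0) from funext hL]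
    exact fderiv_cost_at_equilibrium_apply_single (hEnl.of_le (by norm_num)) hC
      (hv.of_le (by norm_num)) hstat θ _
  have ha' (γ : ℝ) : a γ j - a γ k =
      1 / (2 * π / ω) * ∫ t in (0 : ℝ)..2 * π / ω, f (γ * sin (ω * t)) := by
    rw [ha γ]
    exact EuclideanSpace.smul_intervalIntegral_apply_sub_apply
      ((hvθ.continuous.comp (by fun_prop)).intervalIntegrable _ _) _ j k
  have hb' (γ : ℝ) : b γ j - b γ k =
      2 / (2 * π / ω) * ∫ t in (0 : ℝ)..2 * π / ω, sin (ω * t) * f (γ * sin (ω * t)) := by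
    rw [hb γ, EuclideanSpace.smul_intervalIntegral_apply_sub_apply
      (Continuous.intervalIntegrable (by have := hvθ.continuous; fun_prop) _ _)]
    simp only [PiLp.smul_apply, smul_eq_mul, ← mul_sub, f]
  refine (isBigO_mul_sub_mul (isBigO_average_comp_mul_sin_sub (hf.of_le (by norm_num)) hω.ne')
    (isBigO_sin_coeff_comp_mul_sin_sub hf hω.ne')).congr_left fun γ => ?_
  rw [ha', hb', hgrad]
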